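/- arXiv:2103.11205 — 6 statements merged into one kernel-verified Lean document; each statement's English description precedes it below -/
import Mathlib

section
/- In the translation-type model X(θ) = T_θ(U), let V be an open subset of ℝ^d whose topological boundary has Lebesgue measure zero, and let φ = 1_V be its indicator test. If β_φ(0) = α and β_φ(θ) → 1 as ‖θ‖ → ∞, then φ is a regular test of level α: β_φ(0) = α, θ ↦ β_φ(θ) is continuous on ℝ^p, and 1 − β_φ vanishes at infinity; that is, φ ∈ Φ₀(α). -/
open MeasureTheory Topology Filter

/-! The power of `1_V` at `θ` is `∫ 1_V(T_θ u) dμ(u)`. For fixed `u`, `θ ↦ 1_V(T_θ u)` is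
continuous at `θ₀` as soon as `T_θ₀ u ∉ ∂V`, and by absolute continuity of the law of `X(θ₀)`
this happens for `μ`-a.e. `u`; dominated convergence (with bound `1`) gives continuity of the
power at `θ₀`. Vanishing at infinity of `1 − β` is a restatement of `β θ → 1`, since bounded
sets of `ℝ^p` have compact closure. -/

theorem continuousAt_measureReal_preimage_of_null_frontier {Θ Ω Y : Type*} [TopologicalSpace Θ]
    [FirstCountableTopology Θ] [MeasurableSpace Ω] [TopologicalSpace Y] [MeasurableSpace Y]
    (μ : Measure Ω) [IsFiniteMeasure μ] {T : Θ → Ω → Y} (hT_meas : ∀ θ, Measurable (T θ))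
    (hT_cont : ∀ u, Continuous fun θ => T θ u) {V : Set Y} (hV : MeasurableSet V) {θ₀ : Θ}
    (hθ₀ : μ (T θ₀ ⁻¹' frontier V) = 0) :
    ContinuousAt (fun θ => μ.real (T θ ⁻¹' V)) θ₀ := by
  have h_integral : (fun θ => μ.real (T θ ⁻¹' V)) = fun θ => ∫ u, V.indicator 1 (T θ u) ∂μ :=
    funext fun θ => (integral_indicator_one (hT_meas θ hV)).symm
  rw [h_integral]
  refine continuousAt_of_dominated (bound := 1)
    (Eventually.of_forall fun θ =>
      ((measurable_one.indicator hV).comp (hT_meas θ)).aestronglyMeasurable)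
    (Eventually.of_forall fun θ => ae_of_all _ fun u =>
      (norm_indicator_le_norm_self _ _).trans_eq norm_one) (integrable_const 1) ?_
  filter_upwards [measure_eq_zero_iff_ae_notMem.mp hθ₀] with u hu
  exact ContinuousAt.comp (f := fun θ => T θ u) (continuousOn_const.continuousAt_indicator hu)
    (hT_cont u).continuousAt

theorem stmt_4_general (d p : ℕ)
    (μ : Measure (EuclideanSpace ℝ (Fin d))) [IsProbabilityMeasure μ]
    (T : EuclideanSpace ℝ (Fin p) → EuclideanSpace ℝ (Fin d) → EuclideanSpace ℝ (Fin d))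
    (hT_meas : ∀ θ, Measurable (T θ))
    -- (T1) : θ ↦ T_θ(u) is continuous
    (hT1 : ∀ u, Continuous fun θ => T θ u)
    -- the law of X(θ) = T_θ(U) has a density with respect to Lebesgue measure
    (hac : ∀ θ, Measure.map (T θ) μ ≪ volume)
    (α : ℝ)
    (V : Set (EuclideanSpace ℝ (Fin d))) (hV : IsOpen V)
    (hVb : volume (frontier V) = 0)
    -- power function of the indicator test φ = 1_V
    (β : EuclideanSpace ℝ (Fin p) → ℝ)
    (hβ : β = fun θ => ((Measure.map (T θ) μ) V).toReal)
    -- (I) size α; (II) power tends to one at infinity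
    (hI : β 0 = α)
    (hII : ∀ ε : ℝ, 0 < ε → ∃ R : ℝ, ∀ θ, R < ‖θ‖ → 1 - ε < β θ) :
    β 0 = α ∧ Continuous β ∧
      (∀ ε : ℝ, 0 < ε → ∃ K : Set (EuclideanSpace ℝ (Fin p)), IsCompact K ∧
        {θ : EuclideanSpace ℝ (Fin p) | ε ≤ 1 - β θ} ⊆ K) := by
  refine ⟨hI, ?_, fun ε hε => ?_⟩
  · have hβ_preimage : β = fun θ => μ.real (T θ ⁻¹' V) :=
      hβ.trans (funext fun θ => map_measureReal_apply (hT_meas θ) hV.measurableSet)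
    rw [hβ_preimage, continuous_iff_continuousAt]
    intro θ
    refine continuousAt_measureReal_preimage_of_null_frontier μ hT_meas hT1 hV.measurableSet ?_
    rw [← Measure.map_apply (hT_meas θ) isClosed_frontier.measurableSet]
    exact hac θ hVb
  · obtain ⟨R, hR⟩ := hII ε hε
    have hbdd : Bornology.IsBounded {θ | ε ≤ 1 - β θ} :=
      isBounded_iff_forall_norm_le.2 ⟨R, fun θ (hθ : ε ≤ 1 - β θ) =>
        not_lt.1 fun hlt => by linarith [hR θ hlt]⟩
    exact ⟨_, hbdd.isCompact_closure, subset_closure⟩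

theorem stmt_4 (d p : ℕ)
    (μ : Measure (EuclideanSpace ℝ (Fin d))) [IsProbabilityMeasure μ]
    (fU : EuclideanSpace ℝ (Fin d) → ℝ) (hfU_pos : ∀ u, 0 < fU u)
    (hμ : μ = volume.withDensity (fun u => ENNReal.ofReal (fU u)))
    (T : EuclideanSpace ℝ (Fin p) → EuclideanSpace ℝ (Fin d) → EuclideanSpace ℝ (Fin d))
    (hT_meas : ∀ θ, Measurable (T θ))
    (hT_bij : ∀ θ, Function.Bijective (T θ))
    -- (T1) : θ ↦ T_θ(u) is continuous
    (hT1 : ∀ u, Continuous fun θ => T θ u)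
    -- (T2) : ‖T_θ(u)‖ → ∞ as ‖θ‖ → ∞
    (hT2 : ∀ u, ∀ M : ℝ, ∃ R : ℝ, ∀ θ, R < ‖θ‖ → M < ‖T θ u‖)
    -- the law of X(θ) = T_θ(U) has a density with respect to Lebesgue measure
    (hac : ∀ θ, Measure.map (T θ) μ ≪ volume)
    (α : ℝ) (hα : α ∈ Set.Ioo (0 : ℝ) 1)
    (V : Set (EuclideanSpace ℝ (Fin d))) (hV : IsOpen V)
    (hVb : volume (frontier V) = 0)
    -- power function of the indicator test φ = 1_V
    (β : EuclideanSpace ℝ (Fin p) → ℝ)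
    (hβ : β = fun θ => ((Measure.map (T θ) μ) V).toReal)
    -- (I) size α; (II) power tends to one at infinity
    (hI : β 0 = α)
    (hII : ∀ ε : ℝ, 0 < ε → ∃ R : ℝ, ∀ θ, R < ‖θ‖ → 1 - ε < β θ) :
    β 0 = α ∧ Continuous β ∧
      (∀ ε : ℝ, 0 < ε → ∃ K : Set (EuclideanSpace ℝ (Fin p)), IsCompact K ∧
        {θ : EuclideanSpace ℝ (Fin p) | ε ≤ 1 - β θ} ⊆ K) :=
  stmt_4_general d p μ T hT_meas hT1 hac α V hV hVb β hβ hI hII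
end

section
/- Moran's one-dimensional test φ is a regular test of level α: β_φ(0) = α, the map θ ↦ β_φ(θ) is continuous on ℝ, and β_φ(θ) → 1 as |θ| → ∞; that is, φ ∈ Φ₀(α). -/
open MeasureTheory Filter Set Topology

/-!
By independence, the power of Moran's test is
`β θ = (1 - F₁ (a - θ)) * (1 - F₂ (b₁ - θ)) + F₁ (a - θ) * F₂ (b₂ - θ)`, where `Fᵢ` is the CDF
of `Uᵢ`. A CDF with a density is continuous, so it attains its quantiles: `F₂ b₁ = 1 - α` and
`F₂ b₂ = α`, whence `β 0 = (1 - F₁ a) * α + F₁ a * α = α`. Continuity of `β` is inherited from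
the CDFs, and `β θ → 1` as `θ → ±∞` because all three CDF values tend to `0` (resp. `1`).
-/

theorem Continuous.apply_sInf_setOf_le_eq {F : ℝ → ℝ} (hF : Continuous F) {l₀ l₁ q : ℝ}
    (h₀ : Tendsto F atBot (𝓝 l₀)) (h₁ : Tendsto F atTop (𝓝 l₁)) (hq₀ : l₀ < q) (hq₁ : q < l₁) :
    F (sInf {t | q ≤ F t}) = q := by
  set S := {t | q ≤ F t}
  obtain ⟨T, hT⟩ := eventually_atBot.1 (h₀.eventually (eventually_lt_nhds hq₀))
  have hbdd : BddBelow S := ⟨T, fun t ht => le_of_not_gt fun htT => (hT t htT.le).not_ge ht⟩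
  obtain ⟨t₁, ht₁⟩ := (h₁.eventually (eventually_gt_nhds hq₁)).exists
  have hne : S.Nonempty := ⟨t₁, ht₁.le⟩
  have hmem : sInf S ∈ S := (isClosed_le continuous_const hF).csInf_mem hne hbdd
  have hleft : ∀ᶠ t in 𝓝[<] sInf S, F t ≤ q :=
    eventually_nhdsWithin_of_forall fun t ht => (not_le.1 (notMem_of_lt_csInf (s := S) ht hbdd)).le
  exact le_antisymm (le_of_tendsto hF.continuousWithinAt hleft) hmem

section IntegralIic

variable {E : Type*} [NormedAddCommGroup E] [NormedSpace ℝ E] {μ : Measure ℝ} {f : ℝ → E}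

theorem integral_Iic_eq_integral_sub_integral_Ioi (hf : Integrable f μ) (c : ℝ) :
    ∫ x in Iic c, f x ∂μ = ∫ x, f x ∂μ - ∫ x in Ioi c, f x ∂μ := by
  rw [← integral_add_compl measurableSet_Iic hf, compl_Iic, add_sub_cancel_right]

theorem tendsto_integral_Iic {ι : Type*} {l : Filter ι} [l.IsCountablyGenerated] {a : ι → ℝ}
    (hf : Integrable f μ) (ha : Tendsto a l atTop) :
    Tendsto (fun i => ∫ x in Iic (a i), f x ∂μ) l (𝓝 (∫ x, f x ∂μ)) := by
  simpa only [integral_Iic_eq_integral_sub_integral_Ioi hf, sub_zero] using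
    (tendsto_integral_Ioi_zero (μ := μ) (f := f) ha).const_sub (∫ x, f x ∂μ)

theorem MeasureTheory.Integrable.continuous_integral_Iic [NullSingletonClass μ]
    (hf : Integrable f μ) : Continuous fun t => ∫ x in Iic t, f x ∂μ := by
  have h : (fun t => ∫ x in Iic t, f x ∂μ) =
      fun t => ∫ x in Iic 0, f x ∂μ + ∫ x in 0..t, f x ∂μ := by
    funext t
    rw [← intervalIntegral.integral_Iic_sub_Iic hf.integrableOn hf.integrableOn, add_sub_cancel]
  rw [h]
  exact continuous_const.add (hf.continuous_primitive 0)

theorem integral_Iic_comp_sub_right (f : ℝ → E) (θ c : ℝ) :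
    ∫ x in Iic c, f (x - θ) = ∫ x in Iic (c - θ), f x := by
  have h : (fun x => x - θ) ⁻¹' Iic (c - θ) = Iic c := by ext x; simp
  rw [← h, (measurePreserving_sub_right volume θ).setIntegral_preimage_emb
    (measurableEmbedding_subRight θ) f]

end IntegralIic

section WithDensity

variable {α β : Type*} [MeasurableSpace α] [MeasurableSpace β] {μ : Measure α} {ν : Measure β}

theorem measureReal_withDensity_ofReal {g : α → ℝ} (hg : 0 ≤ g) (hgm : AEStronglyMeasurable g μ)
    {s : Set α} (hs : MeasurableSet s) :
    (μ.withDensity fun x => ENNReal.ofReal (g x)).real s = ∫ x in s, g x ∂μ := by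
  rw [measureReal_def, withDensity_apply _ hs,
    integral_eq_lintegral_of_nonneg_ae (Eventually.of_forall hg) hgm.restrict]

theorem withDensity_ofReal_mul_eq_prod [SFinite μ] [SFinite ν] {g₁ : α → ℝ} {g₂ : β → ℝ}
    (hg₁ : 0 ≤ g₁) (hm₁ : AEMeasurable g₁ μ) (hm₂ : AEMeasurable g₂ ν) :
    (μ.prod ν).withDensity (fun z => ENNReal.ofReal (g₁ z.1 * g₂ z.2)) =
      (μ.withDensity fun x => ENNReal.ofReal (g₁ x)).prod
        (ν.withDensity fun y => ENNReal.ofReal (g₂ y)) := by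
  simp_rw [ENNReal.ofReal_mul (hg₁ _)]
  exact (prod_withDensity₀ hm₁.ennreal_ofReal hm₂.ennreal_ofReal).symm

end WithDensity

section Translate

variable {f : ℝ → ℝ} (θ : ℝ)

theorem measureReal_withDensity_comp_sub_Iio (hf₀ : 0 ≤ f) (hf : Integrable f) (c : ℝ) :
    (volume.withDensity fun x => ENNReal.ofReal (f (x - θ))).real (Iio c) =
      ∫ x in Iic (c - θ), f x := by
  rw [measureReal_withDensity_ofReal (fun x => hf₀ (x - θ))
    (hf.comp_sub_right θ).aestronglyMeasurable measurableSet_Iio, ← integral_Iic_eq_integral_Iio,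
    integral_Iic_comp_sub_right]

theorem measureReal_withDensity_comp_sub_Ioi (hf₀ : 0 ≤ f) (hf : Integrable f)
    (hf₁ : ∫ x, f x = 1) (c : ℝ) :
    (volume.withDensity fun x => ENNReal.ofReal (f (x - θ))).real (Ioi c) =
      1 - ∫ x in Iic (c - θ), f x := by
  rw [measureReal_withDensity_ofReal (fun x => hf₀ (x - θ))
    (hf.comp_sub_right θ).aestronglyMeasurable measurableSet_Ioi, ← integral_Iic_comp_sub_right,
    integral_Iic_eq_integral_sub_integral_Ioi (hf.comp_sub_right θ),
    integral_sub_right_eq_self (μ := volume) f θ, hf₁, sub_sub_cancel]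

end Translate

theorem tendsto_const_sub_atTop_atBot (c : ℝ) : Tendsto (fun θ : ℝ => c - θ) atTop atBot := by
  simpa only [sub_eq_add_neg] using tendsto_atBot_add_const_left _ c tendsto_neg_atTop_atBot

theorem tendsto_const_sub_atBot_atTop (c : ℝ) : Tendsto (fun θ : ℝ => c - θ) atBot atTop := by
  simpa only [sub_eq_add_neg] using tendsto_atTop_add_const_left _ c tendsto_neg_atBot_atTop

noncomputable def moranPower (F₁ F₂ : ℝ → ℝ) (a b₁ b₂ θ : ℝ) : ℝ :=
  (1 - F₁ (a - θ)) * (1 - F₂ (b₁ - θ)) + F₁ (a - θ) * F₂ (b₂ - θ)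

section MoranPower

variable {F₁ F₂ : ℝ → ℝ} {a b₁ b₂ : ℝ}

theorem continuous_moranPower (hF₁ : Continuous F₁) (hF₂ : Continuous F₂) :
    Continuous (moranPower F₁ F₂ a b₁ b₂) := by
  unfold moranPower
  fun_prop

theorem Filter.Tendsto.moranPower {l : Filter ℝ} {u v w : ℝ}
    (hu : Tendsto (fun θ => F₁ (a - θ)) l (𝓝 u)) (hv : Tendsto (fun θ => F₂ (b₁ - θ)) l (𝓝 v))
    (hw : Tendsto (fun θ => F₂ (b₂ - θ)) l (𝓝 w)) :
    Tendsto (moranPower F₁ F₂ a b₁ b₂) l (𝓝 ((1 - u) * (1 - v) + u * w)) :=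
  ((tendsto_const_nhds.sub hu).mul (tendsto_const_nhds.sub hv)).add (hu.mul hw)

theorem tendsto_moranPower_cocompact
    (h₁bot : Tendsto F₁ atBot (𝓝 0)) (h₁top : Tendsto F₁ atTop (𝓝 1))
    (h₂bot : Tendsto F₂ atBot (𝓝 0)) (h₂top : Tendsto F₂ atTop (𝓝 1)) :
    Tendsto (moranPower F₁ F₂ a b₁ b₂) (cocompact ℝ) (𝓝 1) := by
  rw [cocompact_eq_atBot_atTop]
  refine tendsto_sup.2 ⟨?_, ?_⟩
  · simpa using Tendsto.moranPower (h₁top.comp (tendsto_const_sub_atBot_atTop a))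
      (h₂top.comp (tendsto_const_sub_atBot_atTop b₁))
      (h₂top.comp (tendsto_const_sub_atBot_atTop b₂))
  · simpa using Tendsto.moranPower (h₁bot.comp (tendsto_const_sub_atTop_atBot a))
      (h₂bot.comp (tendsto_const_sub_atTop_atBot b₁))
      (h₂bot.comp (tendsto_const_sub_atTop_atBot b₂))

end MoranPower

theorem measureReal_rejectionRegion_eq_moranPower {f₁ f₂ : ℝ → ℝ} (h₁₀ : 0 ≤ f₁) (h₂₀ : 0 ≤ f₂)
    (hf₁ : Integrable f₁) (hf₂ : Integrable f₂) (h₁i : ∫ x, f₁ x = 1) (h₂i : ∫ x, f₂ x = 1)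
    (a b₁ b₂ θ : ℝ) :
    ((volume : Measure (ℝ × ℝ)).withDensity
      (fun x => ENNReal.ofReal (f₁ (x.1 - θ) * f₂ (x.2 - θ)))).real
        ((Ioi a ×ˢ Ioi b₁) ∪ (Iio a ×ˢ Iio b₂)) =
      moranPower (fun t => ∫ x in Iic t, f₁ x) (fun t => ∫ x in Iic t, f₂ x) a b₁ b₂ θ := by
  have : IsFiniteMeasure (volume.withDensity fun x => ENNReal.ofReal (f₁ (x - θ))) :=
    isFiniteMeasure_withDensity_ofReal (hf₁.comp_sub_right θ).hasFiniteIntegral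
  have : IsFiniteMeasure (volume.withDensity fun x => ENNReal.ofReal (f₂ (x - θ))) :=
    isFiniteMeasure_withDensity_ofReal (hf₂.comp_sub_right θ).hasFiniteIntegral
  have hdisj : Disjoint (Ioi a ×ˢ Ioi b₁) (Iio a ×ˢ Iio b₂) :=
    disjoint_prod.2 (Or.inl Iio_disjoint_Ioi_same.symm)
  rw [Measure.volume_eq_prod, withDensity_ofReal_mul_eq_prod (fun x => h₁₀ (x - θ))
      (hf₁.comp_sub_right θ).aemeasurable (hf₂.comp_sub_right θ).aemeasurable,
    measureReal_union hdisj (measurableSet_Iio.prod measurableSet_Iio),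
    measureReal_prod_prod, measureReal_prod_prod,
    measureReal_withDensity_comp_sub_Ioi θ h₁₀ hf₁ h₁i,
    measureReal_withDensity_comp_sub_Ioi θ h₂₀ hf₂ h₂i,
    measureReal_withDensity_comp_sub_Iio θ h₁₀ hf₁, measureReal_withDensity_comp_sub_Iio θ h₂₀ hf₂]
  rfl

theorem stmt_7_general
    (f₁ f₂ : ℝ → ℝ)
    (h₁p : ∀ x, 0 < f₁ x) (h₂p : ∀ x, 0 < f₂ x)
    (h₁i : ∫ x, f₁ x = 1) (h₂i : ∫ x, f₂ x = 1)
    -- P θ is the law of (U₁ + θ, U₂ + θ)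
    (P : ℝ → Measure (ℝ × ℝ))
    (hP : P = fun θ => (volume : Measure (ℝ × ℝ)).withDensity
      (fun x => ENNReal.ofReal (f₁ (x.1 - θ) * f₂ (x.2 - θ))))
    (α : ℝ) (hα : α ∈ Set.Ioo (0 : ℝ) 1)
    -- b₁ and b₂ are the (1−α)'th and α'th quantiles of the law of U₂
    (b₁ b₂ : ℝ)
    (hb₁ : b₁ = sInf {t : ℝ | 1 - α ≤ ∫ x in Set.Iic t, f₂ x})
    (hb₂ : b₂ = sInf {t : ℝ | α ≤ ∫ x in Set.Iic t, f₂ x})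
    (a : ℝ)
    -- β is the power function of Moran's test
    (β : ℝ → ℝ)
    (hβ : β = fun θ => ((P θ)
      ((Set.Ioi a ×ˢ Set.Ioi b₁) ∪ (Set.Iio a ×ˢ Set.Iio b₂))).toReal) :
    β 0 = α ∧ Continuous β ∧ Tendsto β (cocompact ℝ) (nhds 1) ∧
      (∀ ε : ℝ, 0 < ε → ∃ K : Set ℝ, IsCompact K ∧ {θ : ℝ | ε ≤ 1 - β θ} ⊆ K) := by
  obtain ⟨hα₀, hα₁⟩ := hα
  have hf₁ : Integrable f₁ := .of_integral_ne_zero (by simp [h₁i])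
  have hf₂ : Integrable f₂ := .of_integral_ne_zero (by simp [h₂i])
  have hβ_eq :
      β = moranPower (fun t => ∫ x in Iic t, f₁ x) (fun t => ∫ x in Iic t, f₂ x) a b₁ b₂ :=
    hβ ▸ hP ▸ funext (measureReal_rejectionRegion_eq_moranPower (fun x => (h₁p x).le)
      (fun x => (h₂p x).le) hf₁ hf₂ h₁i h₂i a b₁ b₂)
  have h₁top : Tendsto (fun t => ∫ x in Iic t, f₁ x) atTop (𝓝 1) :=
    h₁i ▸ tendsto_integral_Iic hf₁ tendsto_id
  have h₂top : Tendsto (fun t => ∫ x in Iic t, f₂ x) atTop (𝓝 1) :=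
    h₂i ▸ tendsto_integral_Iic hf₂ tendsto_id
  have h₂c := hf₂.continuous_integral_Iic
  have hq₁ : ∫ x in Iic b₁, f₂ x = 1 - α :=
    hb₁ ▸ h₂c.apply_sInf_setOf_le_eq (tendsto_integral_Iic_zero tendsto_id) h₂top
      (by linarith) (by linarith)
  have hq₂ : ∫ x in Iic b₂, f₂ x = α :=
    hb₂ ▸ h₂c.apply_sInf_setOf_le_eq (tendsto_integral_Iic_zero tendsto_id) h₂top hα₀ hα₁
  have hlim : Tendsto β (cocompact ℝ) (𝓝 1) := hβ_eq ▸
    tendsto_moranPower_cocompact (tendsto_integral_Iic_zero tendsto_id) h₁top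
      (tendsto_integral_Iic_zero tendsto_id) h₂top
  refine ⟨?_, hβ_eq ▸ continuous_moranPower hf₁.continuous_integral_Iic h₂c, hlim, fun ε hε => ?_⟩
  · simp only [hβ_eq, moranPower, sub_zero, hq₁, hq₂]
    ring
  obtain ⟨K, hK, hKβ⟩ :=
    hasBasis_cocompact.eventually_iff.1 (hlim.eventually (eventually_gt_nhds (sub_lt_self 1 hε)))
  exact ⟨K, hK, fun θ hθ => not_not.1 fun hθK => (hKβ hθK).not_ge (by linarith [hθ.out])⟩

theorem stmt_7
    (f₁ f₂ : ℝ → ℝ)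
    (h₁c : Continuous f₁) (h₂c : Continuous f₂)
    (h₁p : ∀ x, 0 < f₁ x) (h₂p : ∀ x, 0 < f₂ x)
    (M : ℝ) (h₁b : ∀ x, f₁ x ≤ M) (h₂b : ∀ x, f₂ x ≤ M)
    (h₁i : ∫ x, f₁ x = 1) (h₂i : ∫ x, f₂ x = 1)
    -- P θ is the law of (U₁ + θ, U₂ + θ)
    (P : ℝ → Measure (ℝ × ℝ))
    (hP : P = fun θ => (volume : Measure (ℝ × ℝ)).withDensity
      (fun x => ENNReal.ofReal (f₁ (x.1 - θ) * f₂ (x.2 - θ))))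
    (α : ℝ) (hα : α ∈ Set.Ioo (0 : ℝ) 1)
    -- b₁ and b₂ are the (1−α)'th and α'th quantiles of the law of U₂
    (b₁ b₂ : ℝ)
    (hb₁ : b₁ = sInf {t : ℝ | 1 - α ≤ ∫ x in Set.Iic t, f₂ x})
    (hb₂ : b₂ = sInf {t : ℝ | α ≤ ∫ x in Set.Iic t, f₂ x})
    (a : ℝ)
    -- β is the power function of Moran's test
    (β : ℝ → ℝ)
    (hβ : β = fun θ => ((P θ)
      ((Set.Ioi a ×ˢ Set.Ioi b₁) ∪ (Set.Iio a ×ˢ Set.Iio b₂))).toReal) :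
    β 0 = α ∧ Continuous β ∧ Tendsto β (cocompact ℝ) (nhds 1) ∧
      (∀ ε : ℝ, 0 < ε → ∃ K : Set ℝ, IsCompact K ∧ {θ : ℝ | ε ≤ 1 - β θ} ⊆ K) :=
  stmt_7_general f₁ f₂ h₁p h₂p h₁i h₂i P hP α hα b₁ b₂ hb₁ hb₂ a β hβ
end

section
/- Let U₁, U₂ be independent real random variables with continuous, everywhere-positive densities, let α ∈ (0,1), b₁ = inf{t : P(U₂ ≤ t) ≥ 1−α}, b₂ = inf{t : P(U₂ ≤ t) ≥ α}, and a ∈ ℝ. Then for every θ ∈ (0,∞), the power of Moran's test is strictly smaller than that of the upper one-sided test: P(U₁+θ > a)·P(U₂+θ > b₁) + P(U₁+θ < a)·P(U₂+θ < b₂) < P(U₂+θ > b₁). -/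
open MeasureTheory Set Filter Topology

private theorem stmt10_integrable {f : ℝ → ℝ} (hi : ∫ x, f x = 1) : Integrable f := by
  by_contra h
  rw [integral_undef h] at hi
  norm_num at hi

private theorem stmt10_strictMono {f : ℝ → ℝ} (hc : Continuous f) (hp : ∀ x, 0 < f x)
    (hi : ∫ x, f x = 1) : StrictMono (fun t => ∫ x in Iic t, f x) := by
  have hInt : Integrable f := stmt10_integrable hi
  intro s t hst
  have h1 : (∫ x in Iic t, f x) - ∫ x in Iic s, f x = ∫ x in s..t, f x :=
    intervalIntegral.integral_Iic_sub_Iic hInt.integrableOn hInt.integrableOn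
  have h2 : 0 < ∫ x in s..t, f x :=
    intervalIntegral.intervalIntegral_pos_of_pos (hInt.intervalIntegrable) hp hst
  simp only
  linarith

private theorem stmt10_cont {f : ℝ → ℝ} (hi : ∫ x, f x = 1) :
    Continuous (fun t => ∫ x in Iic t, f x) := by
  have hInt : Integrable f := stmt10_integrable hi
  have : (fun t => ∫ x in Iic t, f x)
      = fun t => (∫ x in (0:ℝ)..t, f x) + ∫ x in Iic (0:ℝ), f x := by
    funext t
    have := intervalIntegral.integral_Iic_sub_Iic (f := f) (μ := volume) (a := (0:ℝ)) (b := t)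
      hInt.integrableOn hInt.integrableOn
    linarith
  rw [this]
  exact (hInt.continuous_primitive 0).add continuous_const

private theorem stmt10_quantile {f : ℝ → ℝ} (hc : Continuous f) (hp : ∀ x, 0 < f x)
    (hi : ∫ x, f x = 1) {c : ℝ} (hc0 : 0 < c) (hc1 : c < 1) :
    (∫ x in Iic (sInf {t : ℝ | c ≤ ∫ x in Iic t, f x}), f x) = c := by
  have hInt : Integrable f := stmt10_integrable hi
  set F : ℝ → ℝ := fun t => ∫ x in Iic t, f x with hF
  have hFc : Continuous F := stmt10_cont hi
  -- tendsto at top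
  have hTop : Tendsto F atTop (𝓝 1) := by
    have := (MeasureTheory.aecover_Iic (μ := volume) (l := atTop)
      (b := fun t : ℝ => t) tendsto_id).integral_tendsto_of_countably_generated hInt
    rwa [hi] at this
  -- tendsto at bot
  have hIoiTop : Tendsto (fun t => ∫ x in Ioi t, f x) atBot (𝓝 1) := by
    have := (MeasureTheory.aecover_Ioi (μ := volume) (l := atBot)
      (a := fun t : ℝ => t) tendsto_id).integral_tendsto_of_countably_generated hInt
    rwa [hi] at this
  have hBot : Tendsto F atBot (𝓝 0) := by
    have heq : F = fun t => 1 - ∫ x in Ioi t, f x := by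
      funext t
      have := intervalIntegral.integral_Iic_add_Ioi (b := t) (f := f) (μ := volume)
        hInt.integrableOn hInt.integrableOn
      rw [hi] at this
      simp only [hF]
      linarith
    rw [heq]
    have : Tendsto (fun t => 1 - ∫ x in Ioi t, f x) atBot (𝓝 (1 - 1)) :=
      tendsto_const_nhds.sub hIoiTop
    simpa using this
  set S : Set ℝ := {t : ℝ | c ≤ F t} with hS
  have hclosed : IsClosed S := isClosed_le continuous_const hFc
  have hne : S.Nonempty := by
    obtain ⟨t, ht⟩ := (hTop.eventually (eventually_gt_nhds hc1)).exists
    exact ⟨t, ht.le⟩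
  have hbdd : BddBelow S := by
    obtain ⟨m, hm⟩ := eventually_atBot.mp (hBot.eventually (eventually_lt_nhds hc0))
    exact ⟨m, fun t ht => by
      by_contra h
      exact absurd ht.out (not_le.mpr (hm t (le_of_not_ge h)))⟩
  have hmem : sInf S ∈ S := hclosed.csInf_mem hne hbdd
  refine le_antisymm ?_ hmem
  by_contra h
  push_neg at h
  have hopen : {x : ℝ | c < F x} ∈ 𝓝 (sInf S) :=
    (isOpen_lt continuous_const hFc).mem_nhds h
  have : ∀ᶠ x in 𝓝[<] (sInf S), x ∈ Iio (sInf S) ∧ c < F x :=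
    eventually_mem_nhdsWithin.and (eventually_nhdsWithin_of_eventually_nhds hopen)
  obtain ⟨x, hx1, hx2⟩ := this.exists
  exact absurd (csInf_le hbdd hx2.le) (not_le.mpr hx1)

theorem stmt_10
    (f₁ f₂ : ℝ → ℝ)
    (h₁c : Continuous f₁) (h₂c : Continuous f₂)
    (h₁p : ∀ x, 0 < f₁ x) (h₂p : ∀ x, 0 < f₂ x)
    (h₁i : ∫ x, f₁ x = 1) (h₂i : ∫ x, f₂ x = 1)
    (α : ℝ) (hα : α ∈ Set.Ioo (0 : ℝ) 1)
    (b₁ b₂ : ℝ)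
    (hb₁ : b₁ = sInf {t : ℝ | 1 - α ≤ ∫ x in Set.Iic t, f₂ x})
    (hb₂ : b₂ = sInf {t : ℝ | α ≤ ∫ x in Set.Iic t, f₂ x})
    (a : ℝ) :
    ∀ θ : ℝ, 0 < θ →
      (∫ x in Set.Ioi (a - θ), f₁ x) * (∫ x in Set.Ioi (b₁ - θ), f₂ x) +
        (∫ x in Set.Iio (a - θ), f₁ x) * (∫ x in Set.Iio (b₂ - θ), f₂ x) <
      ∫ x in Set.Ioi (b₁ - θ), f₂ x := by
  intro θ hθ
  obtain ⟨hα0, hα1⟩ := hα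
  have hInt₁ : Integrable f₁ := stmt10_integrable h₁i
  have hInt₂ : Integrable f₂ := stmt10_integrable h₂i
  have hsm₁ := stmt10_strictMono h₁c h₁p h₁i
  have hsm₂ := stmt10_strictMono h₂c h₂p h₂i
  -- quantile values
  have hqb₁ : (∫ x in Iic b₁, f₂ x) = 1 - α := by
    rw [hb₁]; exact stmt10_quantile h₂c h₂p h₂i (by linarith) (by linarith)
  have hqb₂ : (∫ x in Iic b₂, f₂ x) = α := by
    rw [hb₂]; exact stmt10_quantile h₂c h₂p h₂i hα0 hα1
  -- rewrite Iio integrals as Iic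
  have hIio₁ : (∫ x in Iio (a - θ), f₁ x) = ∫ x in Iic (a - θ), f₁ x :=
    (integral_Iic_eq_integral_Iio' (measure_singleton _)).symm
  have hIio₂ : (∫ x in Iio (b₂ - θ), f₂ x) = ∫ x in Iic (b₂ - θ), f₂ x :=
    (integral_Iic_eq_integral_Iio' (measure_singleton _)).symm
  -- rewrite Ioi integrals as 1 - Iic
  have hIoi₁ : (∫ x in Ioi (a - θ), f₁ x) = 1 - ∫ x in Iic (a - θ), f₁ x := by
    have := intervalIntegral.integral_Iic_add_Ioi (b := a - θ) (f := f₁) (μ := volume)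
      hInt₁.integrableOn hInt₁.integrableOn
    rw [h₁i] at this; linarith
  have hIoi₂ : (∫ x in Ioi (b₁ - θ), f₂ x) = 1 - ∫ x in Iic (b₁ - θ), f₂ x := by
    have := intervalIntegral.integral_Iic_add_Ioi (b := b₁ - θ) (f := f₂) (μ := volume)
      hInt₂.integrableOn hInt₂.integrableOn
    rw [h₂i] at this; linarith
  -- key strict inequalities
  have hD : (∫ x in Iic (b₂ - θ), f₂ x) < α := by
    have := hsm₂ (show b₂ - θ < b₂ by linarith)
    simpa [hqb₂] using this
  have hB : α < ∫ x in Ioi (b₁ - θ), f₂ x := by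
    have := hsm₂ (show b₁ - θ < b₁ by linarith)
    rw [hIoi₂]
    simp only at this
    rw [hqb₁] at this
    linarith
  have hC : 0 < ∫ x in Iic (a - θ), f₁ x := by
    have h1 := hsm₁ (show a - θ - 1 < a - θ by linarith)
    have h2 : 0 ≤ ∫ x in Iic (a - θ - 1), f₁ x :=
      setIntegral_nonneg measurableSet_Iic (fun x _ => (h₁p x).le)
    simp only at h1
    linarith
  have hC1 : (∫ x in Iic (a - θ), f₁ x) < 1 := by
    have := hsm₁ (show a - θ < a - θ + 1 by linarith)
    simp only at this
    have h2 : (∫ x in Iic (a - θ + 1), f₁ x) ≤ 1 := by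
      have := intervalIntegral.integral_Iic_add_Ioi (b := a - θ + 1) (f := f₁) (μ := volume)
        hInt₁.integrableOn hInt₁.integrableOn
      rw [h₁i] at this
      have h3 : 0 ≤ ∫ x in Ioi (a - θ + 1), f₁ x :=
        setIntegral_nonneg measurableSet_Ioi (fun x _ => (h₁p x).le)
      linarith
    linarith
  rw [hIio₁, hIio₂, hIoi₁]
  set C := ∫ x in Iic (a - θ), f₁ x
  set D := ∫ x in Iic (b₂ - θ), f₂ x
  set B := ∫ x in Ioi (b₁ - θ), f₂ x
  nlinarith [mul_pos hC (sub_pos.mpr (hD.trans hB))]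
end

section
/- Let π be a probability measure on ℝ with π((0,∞)) = 1. Then there exists ζ ∈ ℝ such that the test φ⁺_ζ, the indicator of (ζ,∞)×(b₁,∞) ∪ (−∞,ζ)×(−∞,b₂), belongs to Φ₀(α) and satisfies ∫ β_{φ⁺_ζ}(θ) dπ(θ) > ∫ β_φ(θ) dπ(θ). Consequently, Moran's test φ is not an α-level π-Bayes test in Φ₀(α) for any π concentrated on (0,∞). -/
/-!
Write `F₁`, `F₂` for the CDFs of `U₁`, `U₂`. By Fubini and translation invariance, the power of
`φ⁺_ζ` at `θ` is `(1 - F₂ (b₁ - θ)) - F₁ (ζ - θ) * (1 - F₂ (b₁ - θ) - F₂ (b₂ - θ))`.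
Since `F₂ b₁ = 1 - α` and `F₂ b₂ = α`, this equals `α` at `θ = 0`; it is continuous and tends
to `1` at `±∞`, so `φ⁺_ζ ∈ Φ₀(α)` for every `ζ`. For `θ > 0` strict monotonicity of `F₂` makes
the bracket positive, so the power strictly decreases in `ζ`: Moran's test is `φ⁺_a`, and
`φ⁺_(a-1)` is strictly more powerful at every `θ > 0`, hence on `π`-average.
-/

open MeasureTheory Filter Set Topology

noncomputable def densityCDF (f : ℝ → ℝ) (t : ℝ) : ℝ := ∫ x in Iic t, f x

section densityCDF

variable {f : ℝ → ℝ}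

lemma densityCDF_sub_densityCDF (hf : Integrable f) (s t : ℝ) :
    densityCDF f t - densityCDF f s = ∫ x in s..t, f x :=
  intervalIntegral.integral_Iic_sub_Iic hf.integrableOn hf.integrableOn

lemma continuous_densityCDF (hf : Integrable f) : Continuous (densityCDF f) := by
  have h : densityCDF f = fun t => (∫ x in (0 : ℝ)..t, f x) + densityCDF f 0 := by
    funext t; linarith [densityCDF_sub_densityCDF hf 0 t]
  rw [h]
  exact (intervalIntegral.continuous_primitive (fun _ _ => hf.intervalIntegrable) 0).add
    continuous_const

lemma strictMono_densityCDF (hpos : ∀ x, 0 < f x) (hf : Integrable f) :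
    StrictMono (densityCDF f) := fun s t hst => by
  have := intervalIntegral.intervalIntegral_pos_of_pos hf.intervalIntegrable hpos hst
  linarith [densityCDF_sub_densityCDF hf s t]

lemma densityCDF_mem_Icc (hnn : ∀ x, 0 ≤ f x) (h1 : ∫ x, f x = 1) (t : ℝ) :
    densityCDF f t ∈ Icc 0 1 :=
  ⟨setIntegral_nonneg measurableSet_Iic fun x _ => hnn x,
    h1 ▸ setIntegral_le_integral (.of_integral_ne_zero (h1 ▸ one_ne_zero)) (.of_forall hnn)⟩

lemma tendsto_densityCDF_atTop (h1 : ∫ x, f x = 1) :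
    Tendsto (densityCDF f) atTop (𝓝 1) :=
  h1 ▸ (aecover_Iic tendsto_id).integral_tendsto_of_countably_generated
    (.of_integral_ne_zero (h1 ▸ one_ne_zero))

lemma tendsto_densityCDF_atBot : Tendsto (densityCDF f) atBot (𝓝 0) :=
  tendsto_integral_Iic_zero tendsto_id

lemma densityCDF_csInf_setOf_le (hpos : ∀ x, 0 < f x) (h1 : ∫ x, f x = 1) {c : ℝ}
    (hc0 : 0 < c) (hc1 : c < 1) : densityCDF f (sInf {t | c ≤ densityCDF f t}) = c := by
  have hf : Integrable f := .of_integral_ne_zero (h1 ▸ one_ne_zero)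
  obtain ⟨u, hu⟩ := (tendsto_densityCDF_atBot.eventually (eventually_lt_nhds hc0)).exists
  obtain ⟨v, hv⟩ := ((tendsto_densityCDF_atTop h1).eventually (eventually_gt_nhds hc1)).exists
  obtain ⟨t₀, rfl⟩ : c ∈ range (densityCDF f) :=
    intermediate_value_univ u v (continuous_densityCDF hf) ⟨hu.le, hv.le⟩
  have : {t | densityCDF f t₀ ≤ densityCDF f t} = Ici t₀ := by
    ext t; exact (strictMono_densityCDF hpos hf).le_iff_le
  rw [this, csInf_Ici]

lemma integral_Ioi_eq_one_sub_densityCDF (h1 : ∫ x, f x = 1) (t : ℝ) :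
    ∫ x in Ioi t, f x = 1 - densityCDF f t := by
  have hf : Integrable f := .of_integral_ne_zero (h1 ▸ one_ne_zero)
  rw [← h1, ← intervalIntegral.integral_Iic_add_Ioi hf.integrableOn hf.integrableOn, densityCDF]
  ring

end densityCDF

lemma setIntegral_comp_sub_right_Ioi (f : ℝ → ℝ) (θ c : ℝ) :
    ∫ x in Ioi c, f (x - θ) = ∫ x in Ioi (c - θ), f x := by
  have : (fun x => x - θ) ⁻¹' Ioi (c - θ) = Ioi c := by ext; simp
  rw [← this]
  exact (measurePreserving_sub_right volume θ).setIntegral_preimage_emb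
    (measurableEmbedding_subRight θ) f _

lemma setIntegral_comp_sub_right_Iio (f : ℝ → ℝ) (θ c : ℝ) :
    ∫ x in Iio c, f (x - θ) = ∫ x in Iio (c - θ), f x := by
  have : (fun x => x - θ) ⁻¹' Iio (c - θ) = Iio c := by ext; simp
  rw [← this]
  exact (measurePreserving_sub_right volume θ).setIntegral_preimage_emb
    (measurableEmbedding_subRight θ) f _

lemma setIntegral_prod_mul_volume (f₁ f₂ : ℝ → ℝ) (s t : Set ℝ) :
    ∫ z in s ×ˢ t, f₁ z.1 * f₂ z.2 = (∫ x in s, f₁ x) * ∫ y in t, f₂ y := by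
  rw [Measure.volume_eq_prod, ← Measure.prod_restrict]
  exact integral_prod_mul f₁ f₂

lemma integral_withDensity_ofReal {α : Type*} [MeasurableSpace α] {μ : Measure α} {w : α → ℝ}
    (hw : AEMeasurable w μ) (hnn : ∀ x, 0 ≤ w x) (g : α → ℝ) :
    ∫ x, g x ∂μ.withDensity (fun x => ENNReal.ofReal (w x)) = ∫ x, w x * g x ∂μ := by
  rw [integral_withDensity_eq_integral_toReal_smul₀ hw.ennreal_ofReal
    (.of_forall fun _ => ENNReal.ofReal_lt_top)]
  simp only [ENNReal.toReal_ofReal (hnn _), smul_eq_mul]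

/-- The power at `θ` of the test `φ⁺_ζ` when `U₁`, `U₂` have CDFs `F₁`, `F₂`. -/
noncomputable def quadrantPower (F₁ F₂ : ℝ → ℝ) (b₁ b₂ ζ θ : ℝ) : ℝ :=
  (1 - F₁ (ζ - θ)) * (1 - F₂ (b₁ - θ)) + F₁ (ζ - θ) * F₂ (b₂ - θ)

lemma integral_indicator_quadrants_withDensity {f₁ f₂ : ℝ → ℝ}
    (h₁nn : ∀ x, 0 ≤ f₁ x) (h₂nn : ∀ x, 0 ≤ f₂ x) (h₁i : ∫ x, f₁ x = 1) (h₂i : ∫ x, f₂ x = 1)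
    (b₁ b₂ ζ θ : ℝ) :
    ∫ z, ((Ioi ζ ×ˢ Ioi b₁) ∪ (Iio ζ ×ˢ Iio b₂)).indicator (fun _ => (1 : ℝ)) z
      ∂(volume : Measure (ℝ × ℝ)).withDensity
        (fun z => ENNReal.ofReal (f₁ (z.1 - θ) * f₂ (z.2 - θ)))
    = quadrantPower (densityCDF f₁) (densityCDF f₂) b₁ b₂ ζ θ := by
  have hf₁ : Integrable f₁ := .of_integral_ne_zero (h₁i ▸ one_ne_zero)
  have hf₂ : Integrable f₂ := .of_integral_ne_zero (h₂i ▸ one_ne_zero)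
  have hw : Integrable fun z : ℝ × ℝ => f₁ (z.1 - θ) * f₂ (z.2 - θ) := by
    rw [Measure.volume_eq_prod]
    exact (hf₁.comp_sub_right θ).mul_prod (hf₂.comp_sub_right θ)
  have hdisj : Disjoint (Ioi ζ ×ˢ Ioi b₁) (Iio ζ ×ˢ Iio b₂ : Set (ℝ × ℝ)) :=
    disjoint_prod.2 (Or.inl Ioi_disjoint_Iio_same)
  rw [integral_withDensity_ofReal hw.aemeasurable fun z => mul_nonneg (h₁nn _) (h₂nn _)]
  simp_rw [← indicator_mul_right _ (fun z : ℝ × ℝ => f₁ (z.1 - θ) * f₂ (z.2 - θ)), mul_one]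
  rw [integral_indicator ((measurableSet_Ioi.prod measurableSet_Ioi).union
      (measurableSet_Iio.prod measurableSet_Iio)),
    setIntegral_union hdisj (measurableSet_Iio.prod measurableSet_Iio)
      hw.integrableOn hw.integrableOn,
    setIntegral_prod_mul_volume (fun x => f₁ (x - θ)) (fun y => f₂ (y - θ)),
    setIntegral_prod_mul_volume (fun x => f₁ (x - θ)) (fun y => f₂ (y - θ)),
    setIntegral_comp_sub_right_Ioi, setIntegral_comp_sub_right_Ioi,
    setIntegral_comp_sub_right_Iio, setIntegral_comp_sub_right_Iio,
    integral_Ioi_eq_one_sub_densityCDF h₁i, integral_Ioi_eq_one_sub_densityCDF h₂i,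
    ← integral_Iic_eq_integral_Iio, ← integral_Iic_eq_integral_Iio]
  rfl

section quadrantPower

variable {F₁ F₂ : ℝ → ℝ} {b₁ b₂ : ℝ}

lemma quadrantPower_mem_Icc (hF₁ : ∀ t, F₁ t ∈ Icc 0 1) (hF₂ : ∀ t, F₂ t ∈ Icc 0 1)
    (ζ θ : ℝ) : quadrantPower F₁ F₂ b₁ b₂ ζ θ ∈ Icc 0 1 := by
  obtain ⟨hu0, hu1⟩ := hF₁ (ζ - θ)
  obtain ⟨hv0, hv1⟩ := hF₂ (b₁ - θ)
  obtain ⟨hq0, hq1⟩ := hF₂ (b₂ - θ)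
  constructor <;> unfold quadrantPower <;> nlinarith [mul_nonneg (sub_nonneg.2 hu1) hv0]

lemma continuous_quadrantPower (hF₁ : Continuous F₁) (hF₂ : Continuous F₂) (ζ : ℝ) :
    Continuous (quadrantPower F₁ F₂ b₁ b₂ ζ) := by
  unfold quadrantPower; fun_prop

lemma tendsto_quadrantPower_cocompact (hF₁ : Tendsto F₁ atBot (𝓝 0))
    (hF₁' : Tendsto F₁ atTop (𝓝 1)) (hF₂ : Tendsto F₂ atBot (𝓝 0))
    (hF₂' : Tendsto F₂ atTop (𝓝 1)) (ζ : ℝ) :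
    Tendsto (quadrantPower F₁ F₂ b₁ b₂ ζ) (cocompact ℝ) (𝓝 1) := by
  have hsub : ∀ c : ℝ, Tendsto (fun θ : ℝ => c - θ) atTop atBot ∧
      Tendsto (fun θ : ℝ => c - θ) atBot atTop := fun c =>
    ⟨tendsto_atBot_add_const_left _ c tendsto_neg_atTop_atBot,
      tendsto_atTop_add_const_left _ c tendsto_neg_atBot_atTop⟩
  unfold quadrantPower
  rw [cocompact_eq_atBot_atTop, tendsto_sup]
  constructor
  · have := ((tendsto_const_nhds (x := (1 : ℝ))).sub (hF₁'.comp (hsub ζ).2)).mul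
      ((tendsto_const_nhds (x := (1 : ℝ))).sub (hF₂'.comp (hsub b₁).2)) |>.add
      ((hF₁'.comp (hsub ζ).2).mul (hF₂'.comp (hsub b₂).2))
    simpa using this
  · have := ((tendsto_const_nhds (x := (1 : ℝ))).sub (hF₁.comp (hsub ζ).1)).mul
      ((tendsto_const_nhds (x := (1 : ℝ))).sub (hF₂.comp (hsub b₁).1)) |>.add
      ((hF₁.comp (hsub ζ).1).mul (hF₂.comp (hsub b₂).1))
    simpa using this

lemma quadrantPower_zero {α : ℝ} (hb₁ : F₂ b₁ = 1 - α) (hb₂ : F₂ b₂ = α) (ζ : ℝ) :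
    quadrantPower F₁ F₂ b₁ b₂ ζ 0 = α := by
  simp only [quadrantPower, sub_zero, hb₁, hb₂]
  ring

lemma integrable_quadrantPower {μ : Measure ℝ} [IsFiniteMeasure μ]
    (hF₁c : Continuous F₁) (hF₂c : Continuous F₂)
    (hF₁ : ∀ t, F₁ t ∈ Icc 0 1) (hF₂ : ∀ t, F₂ t ∈ Icc 0 1) (ζ : ℝ) :
    Integrable (quadrantPower F₁ F₂ b₁ b₂ ζ) μ :=
  .of_bound (continuous_quadrantPower hF₁c hF₂c ζ).aestronglyMeasurable 1
    (.of_forall fun θ => by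
      obtain ⟨h0, h1⟩ := quadrantPower_mem_Icc (b₁ := b₁) (b₂ := b₂) hF₁ hF₂ ζ θ
      exact (Real.norm_of_nonneg h0).trans_le h1)

lemma quadrantPower_lt_quadrantPower (hF₁ : StrictMono F₁) (hF₂ : StrictMono F₂)
    (hb : F₂ b₁ + F₂ b₂ ≤ 1) {ζ ζ' θ : ℝ} (hζ : ζ' < ζ) (hθ : 0 < θ) :
    quadrantPower F₁ F₂ b₁ b₂ ζ θ < quadrantPower F₁ F₂ b₁ b₂ ζ' θ := by
  have h₁ := hF₁ (sub_lt_sub_right hζ θ)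
  have h₂ := hF₂ (sub_lt_self b₁ hθ)
  have h₃ := hF₂ (sub_lt_self b₂ hθ)
  unfold quadrantPower
  nlinarith

end quadrantPower

lemma exists_isCompact_superset_of_tendsto_cocompact {X : Type*} [TopologicalSpace X]
    {g : X → ℝ} (hg : Tendsto g (cocompact X) (𝓝 0)) {ε : ℝ} (hε : 0 < ε) :
    ∃ K, IsCompact K ∧ {x | ε ≤ g x} ⊆ K := by
  obtain ⟨K, hK, hsub⟩ := mem_cocompact'.1 (hg.eventually (eventually_lt_nhds hε))
  exact ⟨K, hK, fun x hx => hsub (not_lt.2 hx : ¬ g x < ε)⟩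

lemma integral_lt_integral_of_ae_lt {α : Type*} [MeasurableSpace α] {μ : Measure α} [NeZero μ]
    {f g : α → ℝ} (hf : Integrable f μ) (hg : Integrable g μ) (hfg : ∀ᵐ x ∂μ, f x < g x) :
    ∫ x, f x ∂μ < ∫ x, g x ∂μ := by
  have hpos : 0 < ∫ x, (g x - f x) ∂μ := by
    rw [integral_pos_iff_support_of_nonneg_ae (hfg.mono fun _ h => (sub_pos.2 h).le) (hg.sub hf)]
    refine pos_iff_ne_zero.2 fun h0 => ?_
    obtain ⟨x, hlt, hx⟩ := (hfg.and (measure_eq_zero_iff_ae_notMem.1 h0)).exists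
    exact hx (sub_pos.2 hlt).ne'
  rw [integral_sub hg hf] at hpos
  linarith

theorem stmt_11_general
    (f₁ f₂ : ℝ → ℝ)
    (h₁p : ∀ x, 0 < f₁ x) (h₂p : ∀ x, 0 < f₂ x)
    (h₁i : ∫ x, f₁ x = 1) (h₂i : ∫ x, f₂ x = 1)
    (P : ℝ → Measure (ℝ × ℝ))
    (hP : P = fun θ => (volume : Measure (ℝ × ℝ)).withDensity
      (fun x => ENNReal.ofReal (f₁ (x.1 - θ) * f₂ (x.2 - θ))))
    (α : ℝ) (hα : α ∈ Set.Ioo (0 : ℝ) 1)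
    (b₁ b₂ : ℝ)
    (hb₁ : b₁ = sInf {t : ℝ | 1 - α ≤ ∫ x in Set.Iic t, f₂ x})
    (hb₂ : b₂ = sInf {t : ℝ | α ≤ ∫ x in Set.Iic t, f₂ x})
    (a : ℝ)
    -- power of an arbitrary test; Moran's test φ; the one-parameter family φ⁺_ζ
    (β : (ℝ × ℝ → ℝ) → ℝ → ℝ) (hβ : β = fun φ' θ => ∫ x, φ' x ∂(P θ))
    (φ : ℝ × ℝ → ℝ)
    (hφ : φ = Set.indicator
      ((Set.Ioi a ×ˢ Set.Ioi b₁) ∪ (Set.Iio a ×ˢ Set.Iio b₂)) (fun _ => (1 : ℝ)))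
    (φplus : ℝ → ℝ × ℝ → ℝ)
    (hφplus : φplus = fun ζ => Set.indicator
      ((Set.Ioi ζ ×ˢ Set.Ioi b₁) ∪ (Set.Iio ζ ×ˢ Set.Iio b₂)) (fun _ => (1 : ℝ)))
    -- the class Φ₀(α) of regular tests of level α
    (Φ₀ : Set (ℝ × ℝ → ℝ))
    (hΦ₀ : Φ₀ = {φ' : ℝ × ℝ → ℝ | Measurable φ' ∧ (∀ x, φ' x ∈ Set.Icc (0 : ℝ) 1) ∧
      β φ' 0 = α ∧ Continuous (fun θ : ℝ => 1 - β φ' θ) ∧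
      ∀ ε : ℝ, 0 < ε → ∃ K : Set ℝ, IsCompact K ∧ {θ : ℝ | ε ≤ 1 - β φ' θ} ⊆ K})
    -- π is a probability measure concentrated on (0,∞)
    (π : Measure ℝ) (hπprob : IsProbabilityMeasure π)
    (hπ : π (Set.Ioi (0 : ℝ)) = 1) :
    (∃ ζ : ℝ, φplus ζ ∈ Φ₀ ∧ (∫ θ, β φ θ ∂π) < ∫ θ, β (φplus ζ) θ ∂π) ∧
      ¬ (φ ∈ Φ₀ ∧ ∀ φ' ∈ Φ₀, (∫ θ, β φ' θ ∂π) ≤ ∫ θ, β φ θ ∂π) := by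
  obtain ⟨hα0, hα1⟩ := hα
  have hf₁ : Integrable f₁ := .of_integral_ne_zero (h₁i ▸ one_ne_zero)
  have hf₂ : Integrable f₂ := .of_integral_ne_zero (h₂i ▸ one_ne_zero)
  have hF₁ := densityCDF_mem_Icc (fun x => (h₁p x).le) h₁i
  have hF₂ := densityCDF_mem_Icc (fun x => (h₂p x).le) h₂i
  have hFb₁ : densityCDF f₂ b₁ = 1 - α :=
    hb₁ ▸ densityCDF_csInf_setOf_le h₂p h₂i (by linarith) (by linarith)
  have hFb₂ : densityCDF f₂ b₂ = α := hb₂ ▸ densityCDF_csInf_setOf_le h₂p h₂i hα0 hα1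
  have hpower : ∀ ζ, β (φplus ζ) = quadrantPower (densityCDF f₁) (densityCDF f₂) b₁ b₂ ζ :=
    fun ζ => funext fun θ => by
      rw [hβ, hP, hφplus]
      exact integral_indicator_quadrants_withDensity (fun x => (h₁p x).le)
        (fun x => (h₂p x).le) h₁i h₂i b₁ b₂ ζ θ
  have hmem : ∀ ζ, φplus ζ ∈ Φ₀ := fun ζ => by
    rw [hΦ₀, mem_ofPred_eq, hpower, hφplus]
    refine ⟨measurable_const.indicator ((measurableSet_Ioi.prod measurableSet_Ioi).union
        (measurableSet_Iio.prod measurableSet_Iio)), fun x => ⟨indicator_nonneg (fun _ _ => zero_le_one) x,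
        indicator_le_self' (fun _ _ => zero_le_one) x⟩, quadrantPower_zero hFb₁ hFb₂ ζ,
      continuous_const.sub (continuous_quadrantPower (continuous_densityCDF hf₁)
        (continuous_densityCDF hf₂) ζ),
      fun ε hε => exists_isCompact_superset_of_tendsto_cocompact ?_ hε⟩
    simpa using (tendsto_quadrantPower_cocompact tendsto_densityCDF_atBot
        (tendsto_densityCDF_atTop h₁i) tendsto_densityCDF_atBot (tendsto_densityCDF_atTop h₂i)
        ζ).const_sub 1
  have hlt : (∫ θ, β φ θ ∂π) < ∫ θ, β (φplus (a - 1)) θ ∂π := by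
    have hint := integrable_quadrantPower (μ := π) (b₁ := b₁) (b₂ := b₂)
      (continuous_densityCDF hf₁) (continuous_densityCDF hf₂) hF₁ hF₂
    rw [show φ = φplus a by rw [hφ, hφplus], hpower, hpower]
    refine integral_lt_integral_of_ae_lt (hint a) (hint (a - 1)) ?_
    filter_upwards [mem_ae_iff.2 ((prob_compl_eq_zero_iff measurableSet_Ioi).2 hπ)] with θ hθ
    exact quadrantPower_lt_quadrantPower (strictMono_densityCDF h₁p hf₁)
      (strictMono_densityCDF h₂p hf₂) (by linarith) (sub_one_lt a) hθ
  exact ⟨⟨a - 1, hmem (a - 1), hlt⟩, fun ⟨_, hopt⟩ => (hopt _ (hmem (a - 1))).not_gt hlt⟩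

theorem stmt_11
    (f₁ f₂ : ℝ → ℝ)
    (h₁c : Continuous f₁) (h₂c : Continuous f₂)
    (h₁p : ∀ x, 0 < f₁ x) (h₂p : ∀ x, 0 < f₂ x)
    (M : ℝ) (h₁b : ∀ x, f₁ x ≤ M) (h₂b : ∀ x, f₂ x ≤ M)
    (h₁i : ∫ x, f₁ x = 1) (h₂i : ∫ x, f₂ x = 1)
    (P : ℝ → Measure (ℝ × ℝ))
    (hP : P = fun θ => (volume : Measure (ℝ × ℝ)).withDensity
      (fun x => ENNReal.ofReal (f₁ (x.1 - θ) * f₂ (x.2 - θ))))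
    (α : ℝ) (hα : α ∈ Set.Ioo (0 : ℝ) 1)
    (b₁ b₂ : ℝ)
    (hb₁ : b₁ = sInf {t : ℝ | 1 - α ≤ ∫ x in Set.Iic t, f₂ x})
    (hb₂ : b₂ = sInf {t : ℝ | α ≤ ∫ x in Set.Iic t, f₂ x})
    (a : ℝ)
    -- power of an arbitrary test; Moran's test φ; the one-parameter family φ⁺_ζ
    (β : (ℝ × ℝ → ℝ) → ℝ → ℝ) (hβ : β = fun φ' θ => ∫ x, φ' x ∂(P θ))
    (φ : ℝ × ℝ → ℝ)
    (hφ : φ = Set.indicator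
      ((Set.Ioi a ×ˢ Set.Ioi b₁) ∪ (Set.Iio a ×ˢ Set.Iio b₂)) (fun _ => (1 : ℝ)))
    (φplus : ℝ → ℝ × ℝ → ℝ)
    (hφplus : φplus = fun ζ => Set.indicator
      ((Set.Ioi ζ ×ˢ Set.Ioi b₁) ∪ (Set.Iio ζ ×ˢ Set.Iio b₂)) (fun _ => (1 : ℝ)))
    -- the class Φ₀(α) of regular tests of level α
    (Φ₀ : Set (ℝ × ℝ → ℝ))
    (hΦ₀ : Φ₀ = {φ' : ℝ × ℝ → ℝ | Measurable φ' ∧ (∀ x, φ' x ∈ Set.Icc (0 : ℝ) 1) ∧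
      β φ' 0 = α ∧ Continuous (fun θ : ℝ => 1 - β φ' θ) ∧
      ∀ ε : ℝ, 0 < ε → ∃ K : Set ℝ, IsCompact K ∧ {θ : ℝ | ε ≤ 1 - β φ' θ} ⊆ K})
    -- π is a probability measure concentrated on (0,∞)
    (π : Measure ℝ) (hπprob : IsProbabilityMeasure π)
    (hπ : π (Set.Ioi (0 : ℝ)) = 1) :
    (∃ ζ : ℝ, φplus ζ ∈ Φ₀ ∧ (∫ θ, β φ θ ∂π) < ∫ θ, β (φplus ζ) θ ∂π) ∧
      ¬ (φ ∈ Φ₀ ∧ ∀ φ' ∈ Φ₀, (∫ θ, β φ' θ ∂π) ≤ ∫ θ, β φ θ ∂π) :=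
  stmt_11_general f₁ f₂ h₁p h₂p h₁i h₂i P hP α hα b₁ b₂ hb₁ hb₂ a β hβ φ hφ φplus hφplus Φ₀ hΦ₀ π
    hπprob hπ
end

section
/- Let f₁, f₂ : ℝ → (0,∞) be continuous bounded densities and let π be a probability measure on ℝ. If π((0,∞)) > 0 and for every θ ∈ (0,∞) one has lim_{x→∞} f₂(x−θ)/f₂(x) = ∞, then for every fixed x₁ ∈ ℝ, L_π(x₁,x₂) → ∞ as x₂ → ∞. Symmetrically, if π((−∞,0)) > 0 and for every θ ∈ (−∞,0) one has lim_{x→−∞} f₂(x−θ)/f₂(x) = ∞, then for every fixed x₁ ∈ ℝ, L_π(x₁,x₂) → ∞ as x₂ → −∞. -/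
/-!
For θ with f₂(x₂ - θ)/f₂(x₂) → ∞ the integrand of L_π(x₁, ·) tends to ∞ pointwise, and these θ
carry positive π-mass, so Fatou's lemma forces the integral to ∞. Boundedness of the densities
makes each integrand integrable, so the Bochner integral is not the junk value 0.
Both directions are the same statement for the filters `atTop` and `atBot`.
-/

open MeasureTheory Filter Topology
open scoped ENNReal

section Fatou

variable {ι α : Type*} [MeasurableSpace α] {μ : Measure α} {l : Filter ι} [l.IsCountablyGenerated]
  {s : Set α}

theorem tendsto_lintegral_nhds_top_of_forall_mem {F : ι → α → ℝ≥0∞}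
    (hF : ∀ i, AEMeasurable (F i) μ) (hs : MeasurableSet s) (hμs : μ s ≠ 0)
    (h : ∀ a ∈ s, Tendsto (F · a) l (𝓝 ∞)) :
    Tendsto (fun i => ∫⁻ a, F i a ∂μ) l (𝓝 ∞) := by
  rcases l.eq_or_neBot with rfl | _
  · exact tendsto_bot
  have hliminf : ∞ ≤ ∫⁻ a, liminf (F · a) l ∂μ :=
    calc ∞ = ∞ * μ s := (ENNReal.top_mul hμs).symm
      _ = ∫⁻ _ in s, ∞ ∂μ := (setLIntegral_const s ∞).symm
      _ = ∫⁻ a in s, liminf (F · a) l ∂μ :=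
          setLIntegral_congr_fun hs fun a ha => (h a ha).liminf_eq.symm
      _ ≤ ∫⁻ a, liminf (F · a) l ∂μ := setLIntegral_le_lintegral s _
  exact tendsto_of_le_liminf_of_limsup_le (hliminf.trans (lintegral_liminf_le' hF)) le_top

theorem tendsto_integral_atTop_of_forall_mem {g : ι → α → ℝ} (hg_nonneg : ∀ i, 0 ≤ᵐ[μ] g i)
    (hg_int : ∀ i, Integrable (g i) μ) (hs : MeasurableSet s) (hμs : μ s ≠ 0)
    (h : ∀ a ∈ s, Tendsto (g · a) l atTop) :
    Tendsto (fun i => ∫ a, g i a ∂μ) l atTop := by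
  rw [← ENNReal.tendsto_ofReal_nhds_top]
  simp_rw [ofReal_integral_eq_lintegral_ofReal (hg_int _) (hg_nonneg _)]
  exact tendsto_lintegral_nhds_top_of_forall_mem (fun i => (hg_int i).aemeasurable.ennreal_ofReal)
    hs hμs fun a ha => ENNReal.tendsto_ofReal_nhds_top.2 (h a ha)

end Fatou

theorem tendsto_integral_shift_likelihoodRatio_atTop {f₁ f₂ : ℝ → ℝ}
    (h₁m : Measurable f₁) (h₂m : Measurable f₂) (h₁p : ∀ x, 0 < f₁ x) (h₂p : ∀ x, 0 < f₂ x)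
    {M : ℝ} (h₁b : ∀ x, f₁ x ≤ M) (h₂b : ∀ x, f₂ x ≤ M) {π : Measure ℝ} [IsFiniteMeasure π]
    {l : Filter ℝ} [l.IsCountablyGenerated] {s : Set ℝ} (hs : MeasurableSet s) (hπs : π s ≠ 0)
    (hratio : ∀ θ ∈ s, Tendsto (fun x => f₂ (x - θ) / f₂ x) l atTop) (x₁ : ℝ) :
    Tendsto (fun x₂ => ∫ θ, f₁ (x₁ - θ) * f₂ (x₂ - θ) / (f₁ x₁ * f₂ x₂) ∂π) l atTop := by
  have hpos : ∀ x₂ θ, 0 < f₁ (x₁ - θ) * f₂ (x₂ - θ) / (f₁ x₁ * f₂ x₂) := fun x₂ θ =>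
    div_pos (mul_pos (h₁p _) (h₂p _)) (mul_pos (h₁p _) (h₂p _))
  have hint : ∀ x₂, Integrable (fun θ => f₁ (x₁ - θ) * f₂ (x₂ - θ) / (f₁ x₁ * f₂ x₂)) π := by
    intro x₂
    have hmeas : Measurable fun θ => f₁ (x₁ - θ) * f₂ (x₂ - θ) / (f₁ x₁ * f₂ x₂) := by fun_prop
    refine .of_bound hmeas.aestronglyMeasurable (M * M / (f₁ x₁ * f₂ x₂))
      (ae_of_all _ fun θ => ?_)
    rw [Real.norm_of_nonneg (hpos x₂ θ).le]
    have hM : 0 ≤ M := (h₁p 0).le.trans (h₁b 0)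
    exact div_le_div_of_nonneg_right (mul_le_mul (h₁b _) (h₂b _) (h₂p _).le hM)
      (mul_pos (h₁p _) (h₂p _)).le
  refine tendsto_integral_atTop_of_forall_mem (fun x₂ => ae_of_all _ fun θ => (hpos x₂ θ).le)
    hint hs hπs fun θ hθ => ?_
  simp_rw [mul_div_mul_comm]
  exact (hratio θ hθ).const_mul_atTop (div_pos (h₁p _) (h₁p _))

theorem stmt_13_general
    (f₁ f₂ : ℝ → ℝ)
    (h₁c : Continuous f₁) (h₂c : Continuous f₂)
    (h₁p : ∀ x, 0 < f₁ x) (h₂p : ∀ x, 0 < f₂ x)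
    (M : ℝ) (h₁b : ∀ x, f₁ x ≤ M) (h₂b : ∀ x, f₂ x ≤ M)
    (π : Measure ℝ) (hπ : IsProbabilityMeasure π)
    (L : ℝ × ℝ → ℝ)
    (hL : L = fun x : ℝ × ℝ =>
      ∫ θ, f₁ (x.1 - θ) * f₂ (x.2 - θ) / (f₁ x.1 * f₂ x.2) ∂π) :
    ((0 < π (Set.Ioi (0 : ℝ)) →
      (∀ θ : ℝ, 0 < θ → Tendsto (fun x => f₂ (x - θ) / f₂ x) atTop atTop) →
      ∀ x₁ : ℝ, Tendsto (fun x₂ => L (x₁, x₂)) atTop atTop) ∧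
    (0 < π (Set.Iio (0 : ℝ)) →
      (∀ θ : ℝ, θ < 0 → Tendsto (fun x => f₂ (x - θ) / f₂ x) atBot atTop) →
      ∀ x₁ : ℝ, Tendsto (fun x₂ => L (x₁, x₂)) atBot atTop)) := by
  subst hL
  exact ⟨fun hpos hratio => tendsto_integral_shift_likelihoodRatio_atTop h₁c.measurable
      h₂c.measurable h₁p h₂p h₁b h₂b measurableSet_Ioi hpos.ne' hratio,
    fun hpos hratio => tendsto_integral_shift_likelihoodRatio_atTop h₁c.measurable
      h₂c.measurable h₁p h₂p h₁b h₂b measurableSet_Iio hpos.ne' hratio⟩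

theorem stmt_13
    (f₁ f₂ : ℝ → ℝ)
    (h₁c : Continuous f₁) (h₂c : Continuous f₂)
    (h₁p : ∀ x, 0 < f₁ x) (h₂p : ∀ x, 0 < f₂ x)
    (M : ℝ) (h₁b : ∀ x, f₁ x ≤ M) (h₂b : ∀ x, f₂ x ≤ M)
    (h₁i : ∫ x, f₁ x = 1) (h₂i : ∫ x, f₂ x = 1)
    (π : Measure ℝ) (hπ : IsProbabilityMeasure π)
    (L : ℝ × ℝ → ℝ)
    (hL : L = fun x : ℝ × ℝ =>
      ∫ θ, f₁ (x.1 - θ) * f₂ (x.2 - θ) / (f₁ x.1 * f₂ x.2) ∂π) :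
    ((0 < π (Set.Ioi (0 : ℝ)) →
      (∀ θ : ℝ, 0 < θ → Tendsto (fun x => f₂ (x - θ) / f₂ x) atTop atTop) →
      ∀ x₁ : ℝ, Tendsto (fun x₂ => L (x₁, x₂)) atTop atTop) ∧
    (0 < π (Set.Iio (0 : ℝ)) →
      (∀ θ : ℝ, θ < 0 → Tendsto (fun x => f₂ (x - θ) / f₂ x) atBot atTop) →
      ∀ x₁ : ℝ, Tendsto (fun x₂ => L (x₁, x₂)) atBot atTop)) :=
  stmt_13_general f₁ f₂ h₁c h₂c h₁p h₂p M h₁b h₂b π hπ L hL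
end

section
/- Let d ≥ 2 and D > 0. Then there exist points (u₁,v₁), (u₂,v₂) ∈ ℝ^d × ℝ^d and δ > 0 such that for all (ũ₁,ṽ₁), (ũ₂,ṽ₂) ∈ ℝ^d × ℝ^d with ‖(ũᵢ,ṽᵢ) − (uᵢ,vᵢ)‖ < δ for i = 1,2: (i) ũᵢ ≠ 0 and (ũᵢ·ṽᵢ)/‖ũᵢ‖ < D for i = 1,2, and (ii) the midpoint (ū, v̄) = ((ũ₁+ũ₂)/2, (ṽ₁+ṽ₂)/2) satisfies ū ≠ 0 and (ū·v̄)/‖ū‖ > D. (Hence the acceptance zone {(x₁,x₂) : x₁ = 0 or (x₁·x₂)/‖x₁‖ ≤ D} of Moran's multi-dimensional Gaussian test fails to be convex on a set of positive Lebesgue measure.) -/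
open scoped RealInnerProductSpace

private lemma sqrt_sum_sq_lt {a b ε : ℝ} (ha : 0 ≤ a) (hb : 0 ≤ b)
    (h : Real.sqrt (a ^ 2 + b ^ 2) < ε) : a < ε ∧ b < ε := by
  have hsq := Real.sq_sqrt (show (0:ℝ) ≤ a ^ 2 + b ^ 2 by positivity)
  have hsn := Real.sqrt_nonneg (a ^ 2 + b ^ 2)
  constructor
  · nlinarith
  · nlinarith

/- STATEMENT 19: For d ≥ 2 and D > 0 there are points (u₁,v₁), (u₂,v₂) ∈ ℝ^d × ℝ^d and
δ > 0 such that for all (w₁,z₁), (w₂,z₂) within Euclidean distance δ of (u₁,v₁),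
(u₂,v₂) respectively: ũᵢ ≠ 0 and (ũᵢ·ṽᵢ)/‖ũᵢ‖ < D for i = 1,2, while the midpoint
(ū,v̄) = ((w₁+w₂)/2, (z₁+z₂)/2) satisfies ū ≠ 0 and (ū·v̄)/‖ū‖ > D. -/
theorem stmt_19
    (d : ℕ) (hd : 2 ≤ d) (D : ℝ) (hD : 0 < D) :
    ∃ (u₁ v₁ u₂ v₂ : EuclideanSpace ℝ (Fin d)) (δ : ℝ), 0 < δ ∧
      ∀ w₁ z₁ w₂ z₂ : EuclideanSpace ℝ (Fin d),
        Real.sqrt (‖w₁ - u₁‖ ^ 2 + ‖z₁ - v₁‖ ^ 2) < δ →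
        Real.sqrt (‖w₂ - u₂‖ ^ 2 + ‖z₂ - v₂‖ ^ 2) < δ →
        (w₁ ≠ 0 ∧ ⟪w₁, z₁⟫ / ‖w₁‖ < D) ∧
        (w₂ ≠ 0 ∧ ⟪w₂, z₂⟫ / ‖w₂‖ < D) ∧
        ((2 : ℝ)⁻¹ • (w₁ + w₂) ≠ 0 ∧
          D < ⟪(2 : ℝ)⁻¹ • (w₁ + w₂), (2 : ℝ)⁻¹ • (z₁ + z₂)⟫ /
            ‖(2 : ℝ)⁻¹ • (w₁ + w₂)‖) := by
  classical
  have h01 : (0 : ℕ) < d := by omega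
  have h11 : (1 : ℕ) < d := by omega
  set i0 : Fin d := ⟨0, h01⟩
  set i1 : Fin d := ⟨1, h11⟩
  have hi : i0 ≠ i1 := by simp [i0, i1, Fin.ext_iff]
  set e0 : EuclideanSpace ℝ (Fin d) := EuclideanSpace.single i0 (1 : ℝ) with he0
  set e1 : EuclideanSpace ℝ (Fin d) := EuclideanSpace.single i1 (1 : ℝ) with he1
  set c : ℝ := 6 / 5 * D with hc
  have hcpos : 0 < c := by positivity
  set u₁ : EuclideanSpace ℝ (Fin d) := e0 + e1 with hu₁
  set u₂ : EuclideanSpace ℝ (Fin d) := e0 - e1 with hu₂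
  set v : EuclideanSpace ℝ (Fin d) := c • e0 with hv
  -- basic inner products
  have h00 : ⟪e0, e0⟫ = (1 : ℝ) := by
    simp [he0, EuclideanSpace.inner_single_left, EuclideanSpace.single_apply]
  have h01' : ⟪e0, e1⟫ = (0 : ℝ) := by
    rw [he0, he1, EuclideanSpace.inner_single_left]
    simp [EuclideanSpace.single_apply, Fin.ext_iff, i0, i1]
  have h10' : ⟪e1, e0⟫ = (0 : ℝ) := by
    rw [he0, he1, EuclideanSpace.inner_single_left]
    simp [EuclideanSpace.single_apply, Fin.ext_iff, i0, i1]
  have h11' : ⟪e1, e1⟫ = (1 : ℝ) := by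
    simp [he1, EuclideanSpace.inner_single_left, EuclideanSpace.single_apply]
  have hne0 : ‖e0‖ = 1 := by
    rw [norm_eq_sqrt_real_inner e0, h00, Real.sqrt_one]
  have hnu₁ : ‖u₁‖ = Real.sqrt 2 := by
    rw [norm_eq_sqrt_real_inner u₁]
    congr 1
    rw [hu₁, inner_add_left, inner_add_right, inner_add_right, h00, h01', h10', h11']
    norm_num
  have hnu₂ : ‖u₂‖ = Real.sqrt 2 := by
    rw [norm_eq_sqrt_real_inner u₂]
    congr 1
    rw [hu₂, inner_sub_left, inner_sub_right, inner_sub_right, h00, h01', h10', h11']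
    norm_num
  have hsqrt2 : (6 / 5 : ℝ) < Real.sqrt 2 := by
    rw [show (6 / 5 : ℝ) = Real.sqrt ((6 / 5) ^ 2) from
      (Real.sqrt_sq (by norm_num)).symm]
    exact Real.sqrt_lt_sqrt (by positivity) (by norm_num)
  have hsqrt2pos : (0 : ℝ) < Real.sqrt 2 := by positivity
  -- the function f
  set f : EuclideanSpace ℝ (Fin d) × EuclideanSpace ℝ (Fin d) → ℝ := fun p => ⟪p.1, p.2⟫ / ‖p.1‖ with hf
  set s : Set (EuclideanSpace ℝ (Fin d) × EuclideanSpace ℝ (Fin d)) := {p | p.1 ≠ 0} with hs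
  have hsopen : IsOpen s := isOpen_compl_singleton.preimage continuous_fst
  have hfc : ContinuousOn f s := by
    apply ContinuousOn.div
    · exact continuous_inner.continuousOn
    · exact (continuous_fst.norm).continuousOn
    · intro p hp
      exact norm_ne_zero_iff.mpr hp
  set Olt : Set (EuclideanSpace ℝ (Fin d) × EuclideanSpace ℝ (Fin d)) := s ∩ f ⁻¹' Set.Iio D with hOlt
  set Ogt : Set (EuclideanSpace ℝ (Fin d) × EuclideanSpace ℝ (Fin d)) := s ∩ f ⁻¹' Set.Ioi D with hOgt
  have hOltopen : IsOpen Olt := hfc.isOpen_inter_preimage hsopen isOpen_Iio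
  have hOgtopen : IsOpen Ogt := hfc.isOpen_inter_preimage hsopen isOpen_Ioi
  set m : (EuclideanSpace ℝ (Fin d) × EuclideanSpace ℝ (Fin d)) × (EuclideanSpace ℝ (Fin d) × EuclideanSpace ℝ (Fin d)) → EuclideanSpace ℝ (Fin d) × EuclideanSpace ℝ (Fin d) := fun q =>
    ((2 : ℝ)⁻¹ • (q.1.1 + q.2.1), (2 : ℝ)⁻¹ • (q.1.2 + q.2.2)) with hm
  have hmc : Continuous m := by fun_prop
  set S : Set ((EuclideanSpace ℝ (Fin d) × EuclideanSpace ℝ (Fin d)) × (EuclideanSpace ℝ (Fin d) × EuclideanSpace ℝ (Fin d))) :=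
    (Prod.fst ⁻¹' Olt) ∩ (Prod.snd ⁻¹' Olt) ∩ (m ⁻¹' Ogt) with hS
  have hSopen : IsOpen S :=
    ((hOltopen.preimage continuous_fst).inter (hOltopen.preimage continuous_snd)).inter
      (hOgtopen.preimage hmc)
  set P : (EuclideanSpace ℝ (Fin d) × EuclideanSpace ℝ (Fin d)) × (EuclideanSpace ℝ (Fin d) × EuclideanSpace ℝ (Fin d)) := ((u₁, v), (u₂, v)) with hP
  have hu₁ne : u₁ ≠ 0 := by
    intro h
    rw [← norm_eq_zero] at h
    rw [hnu₁] at h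
    exact absurd h (by positivity)
  have hu₂ne : u₂ ≠ 0 := by
    intro h
    rw [← norm_eq_zero] at h
    rw [hnu₂] at h
    exact absurd h (by positivity)
  have hiu₁v : ⟪u₁, v⟫ = c := by
    rw [hu₁, hv, inner_add_left, real_inner_smul_right, real_inner_smul_right, h00, h10']
    ring
  have hiu₂v : ⟪u₂, v⟫ = c := by
    rw [hu₂, hv, inner_sub_left, real_inner_smul_right, real_inner_smul_right, h00, h10']
    ring
  have hlt : c / Real.sqrt 2 < D := by
    rw [div_lt_iff₀ hsqrt2pos, hc]
    calc 6 / 5 * D = D * (6 / 5) := by ring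
    _ < D * Real.sqrt 2 := by exact mul_lt_mul_of_pos_left hsqrt2 hD
  have hPmem : P ∈ S := by
    refine ⟨⟨⟨hu₁ne, ?_⟩, ⟨hu₂ne, ?_⟩⟩, ?_⟩
    · show f (u₁, v) < D
      simp only [hf, hiu₁v, hnu₁]
      exact hlt
    · show f (u₂, v) < D
      simp only [hf, hiu₂v, hnu₂]
      exact hlt
    · have hmid1 : (2 : ℝ)⁻¹ • (u₁ + u₂) = e0 := by
        rw [hu₁, hu₂]
        have : e0 + e1 + (e0 - e1) = (2 : ℝ) • e0 := by
          rw [two_smul]; abel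
        rw [this, smul_smul]; norm_num
      have hmid2 : (2 : ℝ)⁻¹ • (v + v) = v := by
        rw [← two_smul ℝ v, smul_smul]; norm_num
      show m P ∈ Ogt
      have : m P = (e0, v) := by
        simp only [hm, hP, hmid1, hmid2]
      rw [this]
      refine ⟨?_, ?_⟩
      · intro h
        rw [← norm_eq_zero, hne0] at h
        norm_num at h
      · show D < f (e0, v)
        simp only [hf, hne0]
        have : ⟪e0, v⟫ = c := by
          rw [hv, real_inner_smul_right, h00]
          ring
        rw [this, div_one, hc]
        nlinarith
  obtain ⟨ε, hεpos, hball⟩ := Metric.isOpen_iff.mp hSopen P hPmem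
  refine ⟨u₁, v, u₂, v, ε, hεpos, ?_⟩
  intro w₁ z₁ w₂ z₂ hd1 hd2
  have key : ∀ (w u z vv : EuclideanSpace ℝ (Fin d)), Real.sqrt (‖w - u‖ ^ 2 + ‖z - vv‖ ^ 2) < ε →
      dist (w, z) ((u, vv) : EuclideanSpace ℝ (Fin d) × EuclideanSpace ℝ (Fin d)) < ε := by
    intro w u z vv h
    rw [Prod.dist_eq]
    obtain ⟨h1, h2⟩ := sqrt_sum_sq_lt (norm_nonneg (w - u)) (norm_nonneg (z - vv)) h
    rw [dist_eq_norm, dist_eq_norm]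
    exact max_lt h1 h2
  have hmem : ((w₁, z₁), (w₂, z₂)) ∈ S := by
    apply hball
    rw [Metric.mem_ball, Prod.dist_eq]
    exact max_lt (key _ _ _ _ hd1) (key _ _ _ _ hd2)
  obtain ⟨⟨⟨ha1, ha2⟩, ⟨hb1, hb2⟩⟩, hc1, hc2⟩ := hmem
  exact ⟨⟨ha1, ha2⟩, ⟨hb1, hb2⟩, hc1, hc2⟩
end
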